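/- Let N be a binary nearly stable network with the subphylogeny-free property, and let P be a directed path from the root to a leaf ℓ having the maximum number of vertices among all directed root-to-leaf paths of N, with P containing at least four vertices. Then the parent of ℓ (the vertex preceding ℓ on P) is a reticulation. (First step of Lemma 4) -/

import Mathlib

/-!
Common framework: a binary phylogenetic network is modelled as a directed graph
on an ambient type `V`, given by a vertex set `verts : Set V`, an adjacency
relation `adj : V → V → Prop` (no parallel edges are possible in this model),
and a root vertex `root`.
-/

/-- The outdegree of a vertex `v`: the number of its out-neighbours. -/
noncomputable def outdeg {V : Type*} (adj : V → V → Prop) (v : V) : ℕ :=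
  {u | adj v u}.ncard

/-- The indegree of a vertex `v`: the number of its in-neighbours. -/
noncomputable def indeg {V : Type*} (adj : V → V → Prop) (v : V) : ℕ :=
  {u | adj u v}.ncard

/-- A leaf of the network: a vertex with outdegree 0. -/
def IsLeaf {V : Type*} (verts : Set V) (adj : V → V → Prop) (v : V) : Prop :=
  v ∈ verts ∧ outdeg adj v = 0

/-- A tree vertex: indegree 1 and outdegree 2. -/
def IsTreeVertex {V : Type*} (adj : V → V → Prop) (v : V) : Prop :=
  indeg adj v = 1 ∧ outdeg adj v = 2

/-- A reticulation: indegree 2 and outdegree 1. -/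
def IsReticulation {V : Type*} (adj : V → V → Prop) (v : V) : Prop :=
  indeg adj v = 2 ∧ outdeg adj v = 1

/-- `l` is a directed path from `a` to `b`: a nonempty list of vertices starting
at `a`, ending at `b`, each consecutive pair joined by an edge. -/
def IsPathFromTo {V : Type*} (adj : V → V → Prop) (l : List V) (a b : V) : Prop :=
  l.Chain' adj ∧ l.head? = some a ∧ l.getLast? = some b

/-- A binary phylogenetic network: a finite DAG with a unique root (the only
vertex of indegree 0) of outdegree 2, in which every vertex is reachable from
the root, every leaf has indegree 1, and every other non-root vertex is either
a tree vertex or a reticulation. -/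
structure IsBinaryNetwork {V : Type*} (verts : Set V) (adj : V → V → Prop) (root : V) : Prop where
  finite_verts : verts.Finite
  root_mem : root ∈ verts
  adj_mem : ∀ ⦃u v : V⦄, adj u v → u ∈ verts ∧ v ∈ verts
  acyclic : ∀ v : V, ¬ Relation.TransGen adj v v
  root_indeg : indeg adj root = 0
  root_outdeg : outdeg adj root = 2
  root_unique : ∀ v ∈ verts, indeg adj v = 0 → v = root
  reach : ∀ v ∈ verts, Relation.ReflTransGen adj root v
  leaf_indeg : ∀ v ∈ verts, outdeg adj v = 0 → indeg adj v = 1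
  internal_deg : ∀ v ∈ verts, v ≠ root → outdeg adj v ≠ 0 →
      IsTreeVertex adj v ∨ IsReticulation adj v

/-- `x` is stable: there is a leaf `ℓ` such that `x` lies on every directed
path from the root to `ℓ`. -/
def Stable {V : Type*} (verts : Set V) (adj : V → V → Prop) (root x : V) : Prop :=
  ∃ ℓ, IsLeaf verts adj ℓ ∧ ∀ l : List V, IsPathFromTo adj l root ℓ → x ∈ l

/-- A network is reticulation-visible if every reticulation is stable. -/
def ReticulationVisible {V : Type*} (verts : Set V) (adj : V → V → Prop) (root : V) : Prop :=
  ∀ v ∈ verts, IsReticulation adj v → Stable verts adj root v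

/-- A network is nearly stable if every vertex is stable or all of its parents
are stable. -/
def NearlyStable {V : Type*} (verts : Set V) (adj : V → V → Prop) (root : V) : Prop :=
  ∀ v ∈ verts, Stable verts adj root v ∨ ∀ p : V, adj p v → Stable verts adj root p

/-!
The parent `v` of `ℓ` is neither the root (`P` has at least three vertices) nor a leaf, so it is a
tree vertex or a reticulation. If it were a tree vertex, its other child `c` would not be a leaf,
by the subphylogeny-free property. Following `P` down to `v`, stepping to `c` and continuing along
any path from `c` to a leaf (one exists because the network is finite and acyclic) then gives a
root-to-leaf path with at least two vertices after `v`, longer than `P`.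
-/

section

variable {V : Type*} {adj : V → V → Prop}

theorem IsPathFromTo.singleton (a : V) : IsPathFromTo adj [a] a a :=
  ⟨List.isChain_singleton a, rfl, rfl⟩

theorem IsPathFromTo.cons {l : List V} {a b c : V} (hab : adj a b) (h : IsPathFromTo adj l b c) :
    IsPathFromTo adj (a :: l) a c := by
  obtain ⟨hc, hb, hcl⟩ := h
  refine ⟨hc.cons (by simpa [hb]), rfl, ?_⟩
  cases l with
  | nil => simp at hb
  | cons x l => simpa using hcl

theorem IsPathFromTo.append {p q : List V} {a b c d : V} (hp : IsPathFromTo adj p a b)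
    (hbc : adj b c) (hq : IsPathFromTo adj q c d) : IsPathFromTo adj (p ++ q) a d := by
  obtain ⟨hpc, hpa, hpb⟩ := hp
  obtain ⟨hqc, hqh, hqd⟩ := hq
  refine ⟨hpc.append hqc (by simp_all), ?_, ?_⟩
  · cases p with
    | nil => simp at hpa
    | cons x p => simpa using hpa
  · rw [List.getLast?_append, hqd]; rfl

theorem IsPathFromTo.two_le_length {l : List V} {a b : V} (h : IsPathFromTo adj l a b)
    (hab : a ≠ b) : 2 ≤ l.length := by
  obtain ⟨-, ha, hb⟩ := h
  match l with
  | [] => simp at ha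
  | [x] => simp_all
  | _ :: _ :: _ => simp

theorem IsPathFromTo.exists_dropLast {l : List V} {a b : V} (h : IsPathFromTo adj l a b)
    (hl : 2 ≤ l.length) : ∃ w, IsPathFromTo adj l.dropLast a w ∧ adj w b := by
  obtain ⟨hc, ha, hb⟩ := h
  have hne : l.dropLast ≠ [] := by
    rw [← List.length_pos_iff, List.length_dropLast]; omega
  refine ⟨l.dropLast.getLast hne, ⟨hc.dropLast, ?_, List.getLast?_eq_some_getLast hne⟩, ?_⟩
  · rwa [List.head?_dropLast, if_pos (by omega)]
  · rw [List.getLast?_eq_some_getLast (List.ne_nil_of_length_pos (by omega)),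
      Option.some_inj] at hb
    exact hb ▸ hc.rel_getLast_dropLast hne

theorem eq_of_adj_of_indeg_eq_one {u w b : V} (hb : indeg adj b = 1) (hu : adj u b)
    (hw : adj w b) : u = w := by
  obtain ⟨p, hp⟩ := Set.ncard_eq_one.mp hb
  have hu' : u ∈ {x | adj x b} := hu
  have hw' : w ∈ {x | adj x b} := hw
  rw [hp] at hu' hw'
  exact hu'.trans hw'.symm

theorem exists_adj_ne_of_outdeg_eq_two {v : V} (hv : outdeg adj v = 2) (u : V) :
    ∃ c, adj v c ∧ c ≠ u := by
  obtain ⟨x, y, hxy, hxy'⟩ := Set.ncard_eq_two.mp hv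
  have hx : x ∈ {c | adj v c} := by rw [hxy']; exact Set.mem_insert x {y}
  have hy : y ∈ {c | adj v c} := by rw [hxy']; exact Set.mem_insert_of_mem x rfl
  by_cases hxu : x = u
  · exact ⟨y, hy, hxu ▸ hxy.symm⟩
  · exact ⟨x, hx, hxu⟩

theorem wellFounded_flip_of_acyclic {verts : Set V} (hfin : verts.Finite)
    (hmem : ∀ ⦃u v : V⦄, adj u v → v ∈ verts)
    (hacyc : ∀ v : V, ¬ Relation.TransGen adj v v) : WellFounded (flip adj) := by
  have hdesc : ∀ x, {u | Relation.ReflTransGen adj x u}.Finite := fun x =>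
    (hfin.insert x).subset fun u hu => by
      induction hu with
      | refl => exact Set.mem_insert _ _
      | tail _ h _ => exact Set.mem_insert_of_mem _ (hmem h)
  refine Subrelation.wf (fun {y x} (hxy : adj x y) => ?_)
    (InvImage.wf (fun x => {u | Relation.ReflTransGen adj x u}.ncard) wellFounded_lt)
  exact Set.ncard_lt_ncard ⟨fun u hu => .head hxy hu, fun h => hacyc x (.head' hxy (h .refl))⟩
    (hdesc x)

theorem exists_isPathFromTo_isLeaf {verts : Set V} (hwf : WellFounded (flip adj))
    (hmem : ∀ ⦃u v : V⦄, adj u v → v ∈ verts) {x : V} (hx : x ∈ verts) :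
    ∃ ℓ L, IsLeaf verts adj ℓ ∧ IsPathFromTo adj L x ℓ := by
  induction x using hwf.induction with
  | _ x ih =>
  by_cases hout : outdeg adj x = 0
  · exact ⟨x, [x], ⟨hx, hout⟩, .singleton x⟩
  · obtain ⟨y, hy⟩ := Set.nonempty_of_ncard_ne_zero hout
    obtain ⟨ℓ, L, hℓ, hL⟩ := ih y hy (hmem hy)
    exact ⟨ℓ, x :: L, hℓ, hL.cons hy⟩

namespace IsBinaryNetwork

variable {verts : Set V} {root : V}

theorem outdeg_ne_zero_of_adj (hN : IsBinaryNetwork verts adj root) {v w : V} (h : adj v w) :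
    outdeg adj v ≠ 0 :=
  Set.ncard_ne_zero_of_mem h (hN.finite_verts.subset fun _ hu => (hN.adj_mem hu).2)

theorem indeg_ne_zero_of_adj (hN : IsBinaryNetwork verts adj root) {v w : V} (h : adj v w) :
    indeg adj w ≠ 0 :=
  Set.ncard_ne_zero_of_mem h (hN.finite_verts.subset fun _ hu => (hN.adj_mem hu).1)

theorem exists_isPathFromTo_isLeaf (hN : IsBinaryNetwork verts adj root) {x : V}
    (hx : x ∈ verts) : ∃ ℓ L, IsLeaf verts adj ℓ ∧ IsPathFromTo adj L x ℓ :=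
  _root_.exists_isPathFromTo_isLeaf
    (wellFounded_flip_of_acyclic hN.finite_verts (fun _ _ h => (hN.adj_mem h).2) hN.acyclic)
    (fun _ _ h => (hN.adj_mem h).2) hx

end IsBinaryNetwork

end

theorem parent_of_leaf_end_of_longest_path_is_reticulation_general {V : Type*}
    (verts : Set V) (adj : V → V → Prop) (root : V)
    (hN : IsBinaryNetwork verts adj root)
    (hSPF : ∀ x c₁ c₂ : V, adj x c₁ → adj x c₂ → c₁ ≠ c₂ →
      ¬ (IsLeaf verts adj c₁ ∧ IsLeaf verts adj c₂))
    (P : List V) (ℓ : V) (hℓ : IsLeaf verts adj ℓ)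
    (hP : IsPathFromTo adj P root ℓ)
    (hmax : ∀ (ℓ' : V) (Q : List V), IsLeaf verts adj ℓ' →
      IsPathFromTo adj Q root ℓ' → Q.length ≤ P.length)
    (hlen : 4 ≤ P.length)
    (v : V) (hv : adj v ℓ) :
    IsReticulation adj v := by
  obtain ⟨w, hQ, hwℓ⟩ := hP.exists_dropLast (by omega)
  obtain rfl : v = w := eq_of_adj_of_indeg_eq_one (hN.leaf_indeg ℓ hℓ.1 hℓ.2) hv hwℓ
  have hQlen : P.dropLast.length = P.length - 1 := List.length_dropLast
  have hv_ne_root : v ≠ root := by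
    rintro rfl
    obtain ⟨u, -, hu⟩ := hQ.exists_dropLast (by omega)
    exact hN.indeg_ne_zero_of_adj hu hN.root_indeg
  refine (hN.internal_deg v (hN.adj_mem hv).1 hv_ne_root
    (hN.outdeg_ne_zero_of_adj hv)).resolve_left fun htree => ?_
  obtain ⟨c, hwc, hcℓ⟩ := exists_adj_ne_of_outdeg_eq_two htree.2 ℓ
  have hc : ¬ IsLeaf verts adj c := fun hc => hSPF v c ℓ hwc hv hcℓ ⟨hc, hℓ⟩
  obtain ⟨ℓ', L, hℓ', hL⟩ := hN.exists_isPathFromTo_isLeaf (hN.adj_mem hwc).2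
  have hLlen : 2 ≤ L.length := hL.two_le_length fun h => hc (h ▸ hℓ')
  have hlonger := hmax ℓ' _ hℓ' (hQ.append hwc hL)
  rw [List.length_append] at hlonger
  omega

/-- First step of Lemma 4: in a binary nearly stable network with the
subphylogeny-free property, if `P` is a root-to-leaf directed path with the
maximum number of vertices among all root-to-leaf paths and `P` has at least
four vertices, then the parent of the leaf end `ℓ` of `P` (the vertex
preceding `ℓ` on `P`) is a reticulation. -/
theorem parent_of_leaf_end_of_longest_path_is_reticulation {V : Type*}
    (verts : Set V) (adj : V → V → Prop) (root : V)
    (hN : IsBinaryNetwork verts adj root) (hNS : NearlyStable verts adj root)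
    (hSPF : ∀ x c₁ c₂ : V, adj x c₁ → adj x c₂ → c₁ ≠ c₂ →
      ¬ (IsLeaf verts adj c₁ ∧ IsLeaf verts adj c₂))
    (P : List V) (ℓ : V) (hℓ : IsLeaf verts adj ℓ)
    (hP : IsPathFromTo adj P root ℓ)
    (hmax : ∀ (ℓ' : V) (Q : List V), IsLeaf verts adj ℓ' →
      IsPathFromTo adj Q root ℓ' → Q.length ≤ P.length)
    (hlen : 4 ≤ P.length)
    (v : V) (hv : adj v ℓ) :
    IsReticulation adj v :=
  parent_of_leaf_end_of_longest_path_is_reticulation_general verts adj root hN hSPF P ℓ hℓ hP hmax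
    hlen v hv
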